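/- arXiv:1809.09167 — 7 statements merged into one kernel-verified Lean document; each statement's English description precedes it below -/
import Mathlib

section
/- Let r be a positive integer, q a prime with q ≡ 5 (mod 12) or q ≡ 7 (mod 12), and d a positive integer such that ord_q(d) is not divisible by n, where n ≥ 2. Then there are no integers x, y with gcd(x, y, r) = 1 and (x+r)^2 + (x+2r)^2 + ... + (x+dr)^2 = y^n. -/
/-!
Summing the squares gives `12 S = d (3 u² + (d² - 1) r²)` with `u = 2x + (d + 1) r`.
Since `n ∤ ord_q d`, the prime `q` divides `d`. If it also divided the second factor, then
`3 u² ≡ r² (mod q)`; as `3` is a non-residue modulo `q ≡ ±5 (mod 12)`, this forces `q ∣ u, r`,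
hence `q ∣ x` and `q ∣ y`, against primitivity. So `ord_q` of the right-hand side is `ord_q d`,
while `ord_q (12 yⁿ) = n · ord_q y`.
-/

theorem twelve_mul_sum_Icc_sq {R : Type*} [CommRing R] (x r : R) (d : ℕ) :
    12 * ∑ k ∈ Finset.Icc 1 d, (x + k * r) ^ 2 =
      d * (3 * (2 * x + (d + 1) * r) ^ 2 + (d ^ 2 - 1) * r ^ 2) := by
  induction d with
  | zero => simp
  | succ m ih =>
    rw [Finset.sum_Icc_succ_top (by omega), mul_add, ih]
    push_cast
    ring

theorem ZMod.not_isSquare_three_of_mod_twelve {q : ℕ} [Fact q.Prime]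
    (hq : q % 12 = 5 ∨ q % 12 = 7) : ¬ IsSquare (3 : ZMod q) := by
  -- Reciprocity: `3` is a square mod `q` iff `q` is (`q ≡ 1 mod 4`), resp. is not
  -- (`q ≡ 3 mod 4`), a square mod `3`.
  have hq3 : q ≠ 3 := by rintro rfl; omega
  rw [show (3 : ZMod q) = (3 : ℕ) by norm_num]
  rcases hq with h | h
  · rw [ZMod.exists_sq_eq_prime_iff_of_mod_four_eq_one (by omega) (by norm_num),
      ← ZMod.natCast_mod, show q % 3 = 2 by omega]
    decide
  · rw [ZMod.exists_sq_eq_prime_iff_of_mod_four_eq_three (by omega) (by norm_num) hq3,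
      ← ZMod.natCast_mod, show q % 3 = 1 by omega]
    decide

theorem eq_zero_and_eq_zero_of_mul_sq_eq_sq {F : Type*} [Field F] {a u v : F} (ha : ¬ IsSquare a)
    (h : a * u ^ 2 = v ^ 2) : u = 0 ∧ v = 0 := by
  have hu : u = 0 := by
    by_contra hu
    exact ha ⟨v / u, by field_simp; linear_combination h⟩
  refine ⟨hu, ?_⟩
  simpa [hu] using h.symm

theorem dvd_padicValInt_of_mul_pow_eq {p : ℕ} [Fact p.Prime] {a c d y : ℤ} {n : ℕ}
    (ha : ¬ (p : ℤ) ∣ a) (hc : ¬ (p : ℤ) ∣ c) (hd : d ≠ 0) (h : a * y ^ n = d * c) :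
    n ∣ padicValInt p d := by
  have ha0 : a ≠ 0 := by rintro rfl; exact ha (dvd_zero _)
  have hc0 : c ≠ 0 := by rintro rfl; exact hc (dvd_zero _)
  have hy : y ^ n ≠ 0 := by
    intro hy; rw [hy, mul_zero, eq_comm] at h; exact mul_ne_zero hd hc0 h
  have hval := congrArg (padicValInt p) h
  rw [padicValInt.mul ha0 hy, padicValInt.mul hd hc0, padicValInt.eq_zero_of_not_dvd ha,
    padicValInt.eq_zero_of_not_dvd hc, padicValInt, Int.natAbs_pow, padicValNat.pow] at hval
  exact ⟨padicValNat p y.natAbs, by omega⟩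

theorem dvd_and_dvd_of_dvd_three_mul_sq_add {q : ℕ} [Fact q.Prime] (h3 : ¬ IsSquare (3 : ZMod q))
    {u r d : ℤ} (hd : (q : ℤ) ∣ d) (h : (q : ℤ) ∣ 3 * u ^ 2 + (d ^ 2 - 1) * r ^ 2) :
    (q : ℤ) ∣ u ∧ (q : ℤ) ∣ r := by
  simp only [← ZMod.intCast_zmod_eq_zero_iff_dvd] at *
  push_cast at h
  rw [hd] at h
  exact eq_zero_and_eq_zero_of_mul_sq_eq_sq h3 (by linear_combination h)

theorem not_dvd_three_mul_sq_add_of_gcd_eq_one {q : ℕ} [Fact q.Prime] (h3 : ¬ IsSquare (3 : ZMod q))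
    (h12 : ¬ (q : ℤ) ∣ 12) {x y r d : ℤ} {n : ℕ} (hgcd : Int.gcd x (Int.gcd y r) = 1)
    (hd : (q : ℤ) ∣ d)
    (h : 12 * y ^ n = d * (3 * (2 * x + (d + 1) * r) ^ 2 + (d ^ 2 - 1) * r ^ 2)) :
    ¬ (q : ℤ) ∣ 3 * (2 * x + (d + 1) * r) ^ 2 + (d ^ 2 - 1) * r ^ 2 := by
  intro hA
  have hq : Prime (q : ℤ) := Nat.prime_iff_prime_int.mp Fact.out
  obtain ⟨hu, hr⟩ := dvd_and_dvd_of_dvd_three_mul_sq_add h3 hd hA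
  have hx : (q : ℤ) ∣ x := by
    have h2x : (q : ℤ) ∣ 2 * x := by
      rw [show 2 * x = 2 * x + (d + 1) * r - (d + 1) * r by ring]
      exact dvd_sub hu (dvd_mul_of_dvd_right hr _)
    exact (hq.dvd_mul.mp h2x).resolve_left fun h2 => h12 (h2.trans (by norm_num))
  have hy : (q : ℤ) ∣ y := by
    have : (q : ℤ) ∣ 12 * y ^ n := h ▸ dvd_mul_of_dvd_left hd _
    exact hq.dvd_of_dvd_pow ((hq.dvd_mul.mp this).resolve_left h12)
  have := Int.dvd_coe_gcd hx (Int.dvd_coe_gcd hy hr)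
  rw [hgcd, Nat.cast_one] at this
  exact hq.not_dvd_one this

theorem stmt_2_general (r : ℤ) (q : ℕ) (hq : q.Prime)
    (hq12 : q % 12 = 5 ∨ q % 12 = 7) (d : ℕ)
    (n : ℕ) (hval : ¬ n ∣ padicValNat q d) :
    ¬ ∃ x y : ℤ, Int.gcd x (Int.gcd y r) = 1 ∧
      ∑ k ∈ Finset.Icc 1 d, (x + (k : ℤ) * r) ^ 2 = y ^ n := by
  have := Fact.mk hq
  rintro ⟨x, y, hgcd, hsum⟩
  have hv : padicValNat q d ≠ 0 := fun h => hval (h ▸ dvd_zero n)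
  have hd : d ≠ 0 := by rintro rfl; exact hv (padicValNat_zero_right q)
  have hqd : (q : ℤ) ∣ d := Int.natCast_dvd_natCast.mpr (dvd_of_one_le_padicValNat (by omega))
  have h12 : ¬ (q : ℤ) ∣ 12 := by
    have : Nat.Coprime 12 q := by
      rw [Nat.Coprime, Nat.gcd_rec]; rcases hq12 with h | h <;> rw [h] <;> rfl
    exact_mod_cast hq.coprime_iff_not_dvd.mp this.symm
  have hE := twelve_mul_sum_Icc_sq x r d
  rw [hsum] at hE
  have hA := not_dvd_three_mul_sq_add_of_gcd_eq_one (ZMod.not_isSquare_three_of_mod_twelve hq12) h12 hgcd hqd hE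
  rw [← padicValInt.of_nat] at hval
  exact hval (dvd_padicValInt_of_mul_pow_eq h12 hA (by exact_mod_cast hd) hE)

theorem stmt_2 (r : ℤ) (hr : 0 < r) (q : ℕ) (hq : q.Prime)
    (hq12 : q % 12 = 5 ∨ q % 12 = 7) (d : ℕ) (hd : 0 < d)
    (n : ℕ) (hn : 2 ≤ n) (hval : ¬ n ∣ padicValNat q d) :
    ¬ ∃ x y : ℤ, Int.gcd x (Int.gcd y r) = 1 ∧
      ∑ k ∈ Finset.Icc 1 d, (x + (k : ℤ) * r) ^ 2 = y ^ n :=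
  stmt_2_general r q hq hq12 d n hval
end

section
/- There are no integers x, y, r with gcd(x, y, r) = 1 such that (x+r)^2 + (x+2r)^2 + (x+3r)^2 + (x+4r)^2 + (x+5r)^2 + (x+6r)^2 = y^2. -/
/-!
The sum equals `6x² + 42xr + 91r² ≡ 2x(x + r) + 3r² (mod 4)`. If `r` is odd then `x(x + r)` is
even and the sum is `≡ 3 (mod 4)`, which is not a square; if `r` is even then `y² ≡ 2x² (mod 4)`
forces `x` and then `y` to be even. So `2` divides `x`, `y` and `r`.
-/

lemma sum_sq_six_consecutive (x r : ℤ) :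
    (x + r) ^ 2 + (x + 2 * r) ^ 2 + (x + 3 * r) ^ 2 + (x + 4 * r) ^ 2 +
      (x + 5 * r) ^ 2 + (x + 6 * r) ^ 2 = 6 * x ^ 2 + 42 * x * r + 91 * r ^ 2 := by
  ring

lemma ZMod.two_mul_eq_zero_of_sq_eq_quadForm :
    ∀ a b c : ZMod 4, 6 * a ^ 2 + 42 * a * b + 91 * b ^ 2 = c ^ 2 →
      2 * a = 0 ∧ 2 * b = 0 ∧ 2 * c = 0 := by
  decide

lemma Int.two_dvd_of_two_mul_cast_zmod_four_eq_zero {x : ℤ} (h : 2 * (x : ZMod 4) = 0) :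
    2 ∣ x := by
  have : (4 : ℤ) ∣ 2 * x := (ZMod.intCast_zmod_eq_zero_iff_dvd _ 4).mp (by push_cast; exact h)
  omega

lemma two_dvd_of_sq_eq_quadForm {x y r : ℤ} (h : 6 * x ^ 2 + 42 * x * r + 91 * r ^ 2 = y ^ 2) :
    2 ∣ x ∧ 2 ∣ y ∧ 2 ∣ r := by
  have hmod := congrArg (Int.cast : ℤ → ZMod 4) h
  push_cast at hmod
  obtain ⟨hx, hr, hy⟩ := ZMod.two_mul_eq_zero_of_sq_eq_quadForm _ _ _ hmod
  exact ⟨Int.two_dvd_of_two_mul_cast_zmod_four_eq_zero hx,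
    Int.two_dvd_of_two_mul_cast_zmod_four_eq_zero hy,
    Int.two_dvd_of_two_mul_cast_zmod_four_eq_zero hr⟩

theorem stmt_3 :
    ¬ ∃ x y r : ℤ, Int.gcd x (Int.gcd y r) = 1 ∧
      (x + r) ^ 2 + (x + 2 * r) ^ 2 + (x + 3 * r) ^ 2 + (x + 4 * r) ^ 2 +
        (x + 5 * r) ^ 2 + (x + 6 * r) ^ 2 = y ^ 2 := by
  rintro ⟨x, y, r, hgcd, hsum⟩
  rw [sum_sq_six_consecutive] at hsum
  obtain ⟨hx, hy, hr⟩ := two_dvd_of_sq_eq_quadForm hsum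
  have : (2 : ℤ) ∣ (Int.gcd x (Int.gcd y r) : ℤ) := Int.dvd_coe_gcd hx (Int.dvd_coe_gcd hy hr)
  rw [hgcd] at this
  norm_num at this
end

section
/- There are no integers x, y, r with gcd(x, y, r) = 1 such that the sum (x+r)^2 + (x+2r)^2 + ... + (x+8r)^2 of eight squares in arithmetic progression equals y^2. -/
/-! The sum equals `8x² + 72xr + 204r²`. A finite check modulo 16 shows that this is a square `y²`
only when `x`, `y` and `r` are all even, which contradicts `gcd(x, y, r) = 1`. -/

lemma sum_Icc_one_eight_sq (x r : ℤ) :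
    ∑ k ∈ Finset.Icc 1 8, (x + (k : ℤ) * r) ^ 2 = 8 * x ^ 2 + 72 * x * r + 204 * r ^ 2 := by
  rw [show (Finset.Icc 1 8 : Finset ℤ) = {1, 2, 3, 4, 5, 6, 7, 8} by decide]
  simp only [Finset.mem_insert, OfNat.one_ne_ofNat, Finset.mem_singleton, or_self,
    not_false_eq_true, Finset.sum_insert, one_mul, OfNat.ofNat_eq_ofNat, Nat.reduceEqDiff,
    Finset.sum_singleton]
  ring

-- In `ZMod 16`, `8 * a = 0` says that `a` is even.
lemma ZMod.eight_mul_eq_zero_of_sq_eq (x y r : ZMod 16) :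
    8 * x ^ 2 + 72 * x * r + 204 * r ^ 2 = y ^ 2 → 8 * x = 0 ∧ 8 * y = 0 ∧ 8 * r = 0 := by
  revert x y r
  decide

lemma Int.two_dvd_of_eight_mul_eq_zero {a : ℤ} (h : (8 * a : ZMod 16) = 0) : 2 ∣ a := by
  have h16 : (16 : ℤ) ∣ 8 * a :=
    (ZMod.intCast_zmod_eq_zero_iff_dvd (8 * a) 16).mp (by push_cast; exact h)
  omega

lemma Int.two_dvd_of_sq_eq {x y r : ℤ} (h : 8 * x ^ 2 + 72 * x * r + 204 * r ^ 2 = y ^ 2) :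
    2 ∣ x ∧ 2 ∣ y ∧ 2 ∣ r := by
  have h16 := congrArg (fun n : ℤ => (n : ZMod 16)) h
  push_cast at h16
  obtain ⟨hx, hy, hr⟩ := ZMod.eight_mul_eq_zero_of_sq_eq _ _ _ h16
  exact ⟨two_dvd_of_eight_mul_eq_zero hx, two_dvd_of_eight_mul_eq_zero hy,
    two_dvd_of_eight_mul_eq_zero hr⟩

theorem stmt_4 :
    ¬ ∃ x y r : ℤ, Int.gcd x (Int.gcd y r) = 1 ∧
      ∑ k ∈ Finset.Icc 1 8, (x + (k : ℤ) * r) ^ 2 = y ^ 2 := by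
  rintro ⟨x, y, r, hgcd, hsum⟩
  obtain ⟨hx, hy, hr⟩ := Int.two_dvd_of_sq_eq ((sum_Icc_one_eight_sq x r).symm.trans hsum)
  have h2 : (2 : ℤ) ∣ (Int.gcd x (Int.gcd y r) : ℤ) := Int.dvd_coe_gcd hx (Int.dvd_coe_gcd hy hr)
  rw [hgcd] at h2
  norm_num at h2
end

section
/- Let x, y, r be integers with gcd(x, y, r) = 1 and (x+r)^2 + (x+2r)^2 = y^2 with r ≥ 1. Then every prime divisor of r is congruent to 1 or 7 modulo 8. -/
/-!
Write `u = 2x + 3r`; the equation becomes `u² - 2y² = -r²`. For an odd prime `p ∣ r` this gives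
`u² ≡ 2y² (mod p)`, and `p ∤ y` (otherwise `p ∣ u`, hence `p ∣ x`, against the gcd condition),
so `2` is a square mod `p`, i.e. `p ≡ ±1 (mod 8)`. The prime `2` cannot divide `r`, since then
the equation forces `x` and `y` to be even.
-/

theorem Nat.Prime.mod_eight_of_dvd_sq_sub_two_mul_sq {p : ℕ} (hp : p.Prime) (hp2 : p ≠ 2)
    {a b : ℤ} (hdvd : (p : ℤ) ∣ b ^ 2 - 2 * a ^ 2) (ha : ¬ (p : ℤ) ∣ a) :
    p % 8 = 1 ∨ p % 8 = 7 := by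
  have := Fact.mk hp
  have hsq : (b : ZMod p) ^ 2 = 2 * (a : ZMod p) ^ 2 := by
    rw [← sub_eq_zero]
    exact_mod_cast (ZMod.intCast_zmod_eq_zero_iff_dvd _ p).mpr hdvd
  have ha0 : (a : ZMod p) ≠ 0 := fun h => ha ((ZMod.intCast_zmod_eq_zero_iff_dvd a p).mp h)
  refine (ZMod.exists_sq_eq_two_iff hp2).mp ⟨b / a, ?_⟩
  field_simp
  linear_combination -hsq

theorem Int.even_of_add_sq_add_two_mul_sq_eq_sq {x y r : ℤ} (hr : Even r)
    (heq : (x + r) ^ 2 + (x + 2 * r) ^ 2 = y ^ 2) : Even x ∧ Even y := by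
  obtain ⟨s, rfl⟩ := hr
  have hy : Even y := by
    rw [← Int.even_pow' two_ne_zero, ← heq]
    exact ⟨x ^ 2 + 6 * x * s + 10 * s ^ 2, by ring⟩
  obtain ⟨m, rfl⟩ := hy
  have hx2 : x ^ 2 = 2 * (m ^ 2 - 3 * x * s - 5 * s ^ 2) :=
    mul_left_cancel₀ two_ne_zero (by linear_combination heq)
  exact ⟨(Int.even_pow' two_ne_zero).mp ⟨_, hx2.trans (two_mul _)⟩, ⟨m, rfl⟩⟩

theorem Nat.Prime.not_dvd_of_gcd_eq_one {p : ℕ} (hp : p.Prime) {x y r : ℤ}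
    (hgcd : Int.gcd x (Int.gcd y r) = 1) (hx : (p : ℤ) ∣ x) (hy : (p : ℤ) ∣ y) :
    ¬ (p : ℤ) ∣ r := fun hr => by
  have h := Int.dvd_coe_gcd hx (Int.dvd_coe_gcd hy hr)
  rw [hgcd] at h
  exact hp.not_dvd_one (Int.natCast_dvd_natCast.mp h)

theorem stmt_5_general (x y r : ℤ) (hgcd : Int.gcd x (Int.gcd y r) = 1)
    (heq : (x + r) ^ 2 + (x + 2 * r) ^ 2 = y ^ 2) :
    ∀ p : ℕ, p.Prime → (p : ℤ) ∣ r → p % 8 = 1 ∨ p % 8 = 7 := by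
  intro p hp hpr
  have hpz : Prime (p : ℤ) := Nat.prime_iff_prime_int.mp hp
  have hp2 : p ≠ 2 := by
    rintro rfl
    obtain ⟨hx, hy⟩ := Int.even_of_add_sq_add_two_mul_sq_eq_sq (even_iff_two_dvd.mpr hpr) heq
    exact hp.not_dvd_of_gcd_eq_one hgcd (even_iff_two_dvd.mp hx) (even_iff_two_dvd.mp hy) hpr
  have hform : (2 * x + 3 * r) ^ 2 - 2 * y ^ 2 = -r ^ 2 := by linear_combination 2 * heq
  have hpy : ¬ (p : ℤ) ∣ y := by
    intro hpy
    have hpu : (p : ℤ) ∣ 2 * x + 3 * r := hpz.dvd_of_dvd_pow (n := 2) <| by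
      rw [eq_add_of_sub_eq hform]
      exact dvd_add (dvd_neg.mpr (dvd_pow hpr two_ne_zero))
        (dvd_mul_of_dvd_right (dvd_pow hpy two_ne_zero) _)
    have hp_not_dvd_two : ¬ (p : ℤ) ∣ 2 := fun h =>
      hp2 ((Nat.prime_dvd_prime_iff_eq hp Nat.prime_two).mp (Int.natCast_dvd_natCast.mp h))
    have hpx : (p : ℤ) ∣ x :=
      (hpz.dvd_or_dvd ((dvd_add_left (dvd_mul_of_dvd_right hpr 3)).mp hpu)).resolve_left
        hp_not_dvd_two
    exact hp.not_dvd_of_gcd_eq_one hgcd hpx hpy hpr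
  exact hp.mod_eight_of_dvd_sq_sub_two_mul_sq hp2
    (hform ▸ dvd_neg.mpr (dvd_pow hpr two_ne_zero)) hpy

theorem stmt_5 (x y r : ℤ) (hr : 1 ≤ r) (hgcd : Int.gcd x (Int.gcd y r) = 1)
    (heq : (x + r) ^ 2 + (x + 2 * r) ^ 2 = y ^ 2) :
    ∀ p : ℕ, p.Prime → (p : ℤ) ∣ r → p % 8 = 1 ∨ p % 8 = 7 :=
  stmt_5_general x y r hgcd heq
end

section
/- Let n be an odd integer, α ∈ Z[i] with α = u + iv for integers u, v, and r an integer such that α^n + i·(conjugate of α)^n = (1+i)r. If n ≡ 1 (mod 4) then (u+v) divides r, and if n ≡ 3 (mod 4) then (u-v) divides r. -/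
theorem stmt_12 (n : ℕ) (hn : Odd n) (u v r : ℤ) (α : ℤ√(-1)) (hα : α = ⟨u, v⟩)
    (h : α ^ n + Zsqrtd.sqrtd * (star α) ^ n = (1 + Zsqrtd.sqrtd) * (r : ℤ√(-1))) :
    (n % 4 = 1 → (u + v) ∣ r) ∧ (n % 4 = 3 → (u - v) ∣ r) := by
  set I : ℤ√(-1) := Zsqrtd.sqrtd with hI
  have hI2 : I ^ 2 = -1 := by
    ext <;> simp [hI, Zsqrtd.sqrtd, pow_two, Zsqrtd.re_mul, Zsqrtd.im_mul]
  have hI4 : I ^ 4 = 1 := by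
    have : I ^ 4 = (I ^ 2) ^ 2 := by ring
    rw [this, hI2]; ring
  constructor
  · intro h1
    -- I ^ n = I
    have hIn : I ^ n = I := by
      obtain ⟨k, hk⟩ : ∃ k, n = 4 * k + 1 := ⟨n / 4, by omega⟩
      rw [hk, pow_add, pow_mul, hI4, one_pow, pow_one, one_mul]
    have hdvd : α + I * star α ∣ α ^ n + I * (star α) ^ n := by
      have := Odd.add_dvd_pow_add_pow α (I * star α) hn
      rwa [mul_pow, hIn] at this
    have hfact : α + I * star α = (1 + I) * ((u + v : ℤ) : ℤ√(-1)) := by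
      subst hα
      ext <;> simp [hI, Zsqrtd.sqrtd, Zsqrtd.re_mul, Zsqrtd.im_mul] <;> ring
    rw [hfact, h] at hdvd
    have h1I : (1 + I : ℤ√(-1)) ≠ 0 := by
      intro hc
      have : (1 + I).re = 0 := by rw [hc]; rfl
      simp [hI, Zsqrtd.sqrtd] at this
    have := (mul_dvd_mul_iff_left h1I).mp hdvd
    exact (Zsqrtd.intCast_dvd_intCast _ _).mp this
  · intro h3
    have hIn : (-I) ^ n = I := by
      obtain ⟨k, hk⟩ : ∃ k, n = 4 * k + 3 := ⟨n / 4, by omega⟩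
      have h4 : (-I) ^ 4 = 1 := by
        have : (-I) ^ 4 = (I ^ 2) ^ 2 := by ring
        rw [this, hI2]; ring
      have h3' : (-I) ^ 3 = I := by
        have : (-I) ^ 3 = -(I ^ 2 * I) := by ring
        rw [this, hI2]; ring
      rw [hk, pow_add, pow_mul, h4, one_pow, one_mul, h3']
    have hdvd : α + (-I) * star α ∣ α ^ n + I * (star α) ^ n := by
      have := Odd.add_dvd_pow_add_pow α ((-I) * star α) hn
      rwa [mul_pow, hIn] at this
    have hfact : α + (-I) * star α = (1 - I) * ((u - v : ℤ) : ℤ√(-1)) := by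
      subst hα
      ext <;> simp [hI, Zsqrtd.sqrtd, Zsqrtd.re_mul, Zsqrtd.im_mul] <;> ring
    have hrw : (1 + I) * (r : ℤ√(-1)) = (1 - I) * (I * r) := by
      have : (1 - I) * I = 1 + I := by
        have : (1 - I) * I = I - I ^ 2 := by ring
        rw [this, hI2]; ring
      rw [← this]; ring
    rw [hfact, h, hrw] at hdvd
    have h1I : (1 - I : ℤ√(-1)) ≠ 0 := by
      intro hc
      have : (1 - I).re = 0 := by rw [hc]; rfl
      simp [hI, Zsqrtd.sqrtd] at this
    have hd := (mul_dvd_mul_iff_left h1I).mp hdvd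
    have hd2 : ((u - v : ℤ) : ℤ√(-1)) ∣ (r : ℤ√(-1)) := by
      have : (I ^ 3) * (I * r) = (r : ℤ√(-1)) := by
        have : (I ^ 3) * (I * r) = I ^ 4 * r := by ring
        rw [this, hI4, one_mul]
      exact this ▸ Dvd.dvd.mul_left hd (I ^ 3)
    exact (Zsqrtd.intCast_dvd_intCast _ _).mp hd2
end

section
/- Let x, y, r, n be integers with n an odd prime, gcd(x, y, r) = 1, r ≥ 1, satisfying (x+r)^2 + (x+2r)^2 + ... + (x+6r)^2 = y^n. Then gcd(r, 6) = 1. -/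
theorem stmt_13 (x y r : ℤ) (hr : 1 ≤ r) (n : ℕ) (hn : n.Prime) (hodd : Odd n)
    (hgcd : Int.gcd x (Int.gcd y r) = 1)
    (heq : ∑ k ∈ Finset.Icc 1 6, (x + (k : ℤ) * r) ^ 2 = y ^ n) :
    Int.gcd r 6 = 1 := by
  have key : 6*x^2 + 42*(x*r) + 91*r^2 = y ^ n := by
    rw [← heq]
    have h6 : Finset.Icc (1:ℤ) 6 = {1,2,3,4,5,6} := by decide
    simp only [h6]
    simp [Finset.sum_insert]
    ring
  have hn2 : 2 ≤ n := hn.two_le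
  have hne2 : n ≠ 2 := by rintro rfl; exact (by decide : ¬ Odd 2) hodd
  have hn3 : 3 ≤ n := by omega
  have hsq : ∀ p : ℤ, p ∣ y → p^2 ∣ y^n := fun p hp =>
    dvd_trans (pow_dvd_pow_of_dvd hp 2) (pow_dvd_pow y (by omega))
  -- no prime p with p ∣ x, p ∣ y, p ∣ r
  have hnp : ∀ p : ℤ, Prime p → p ∣ x → p ∣ y → p ∣ r → False := by
    intro p hp hx hy hrr
    have h1 : p ∣ (Int.gcd y r : ℤ) := Int.dvd_coe_gcd hy hrr
    have h2 : p ∣ (Int.gcd x (Int.gcd y r) : ℤ) := Int.dvd_coe_gcd hx h1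
    rw [hgcd] at h2
    exact hp.not_unit (isUnit_of_dvd_one h2)
  have h2r : ¬ (2:ℤ) ∣ r := by
    intro h2r
    obtain ⟨s, rfl⟩ := h2r
    have h2y : (2:ℤ) ∣ y := by
      have hd : (2:ℤ) ∣ y^n := by
        rw [← key]; exact ⟨3*x^2 + 42*x*s + 182*s^2, by ring⟩
      exact (Int.prime_two.dvd_of_dvd_pow hd)
    have h2x : ¬ (2:ℤ) ∣ x := fun hx => hnp 2 Int.prime_two hx h2y ⟨s, rfl⟩
    have hxo : x % 2 = 1 := by omega
    obtain ⟨u, rfl⟩ := Int.odd_iff.mpr hxo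
    have h4 : (4:ℤ) ∣ y^n := by have := hsq 2 h2y; norm_num at this; exact this
    rw [← key] at h4
    obtain ⟨q, hq⟩ := h4
    have : 6*(2*u+1)^2 + 42*((2*u+1)*(2*s)) + 91*(2*s)^2
        = 4*(6*u^2+6*u+42*u*s+21*s+91*s^2+1) + 2 := by ring
    rw [this] at hq
    omega
  have h3r : ¬ (3:ℤ) ∣ r := by
    intro h3r
    obtain ⟨s, rfl⟩ := h3r
    have hp3 : Prime (3:ℤ) := Int.prime_three
    have h3y : (3:ℤ) ∣ y := by
      have hd : (3:ℤ) ∣ y^n := by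
        rw [← key]; exact ⟨2*x^2 + 42*x*s + 273*s^2, by ring⟩
      exact hp3.dvd_of_dvd_pow hd
    have h3x : ¬ (3:ℤ) ∣ x := fun hx => hnp 3 hp3 hx h3y ⟨s, rfl⟩
    have h9 : (9:ℤ) ∣ y^n := by have := hsq 3 h3y; norm_num at this; exact this
    rw [← key] at h9
    obtain ⟨q, hq⟩ := h9
    have h' : 3 * (2*(x*x)) = 3 * (3*(q - 14*x*s - 91*s^2)) := by linear_combination hq
    have h'' := mul_left_cancel₀ (by norm_num : (3:ℤ) ≠ 0) h'
    have h3d : (3:ℤ) ∣ 2 * (x*x) := ⟨q - 14*x*s - 91*s^2, h''⟩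
    rcases hp3.dvd_mul.mp h3d with h | h
    · norm_num at h
    · rcases hp3.dvd_mul.mp h with h | h <;> exact h3x h
  by_contra hne
  obtain ⟨p, hp, hpd⟩ := Nat.exists_prime_and_dvd hne
  have hpr : (p:ℤ) ∣ r := dvd_trans (Int.ofNat_dvd_right.mpr hpd |>.trans (Int.gcd_dvd_left _ _)) dvd_rfl
  have hp6 : (p:ℤ) ∣ 6 := (Int.ofNat_dvd_right.mpr hpd).trans (Int.gcd_dvd_right _ _)
  have hp6' : p ∣ 6 := by exact_mod_cast hp6
  have hple : p ≤ 6 := Nat.le_of_dvd (by norm_num) hp6'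
  have hp2 := hp.two_le
  interval_cases p <;> first | exact absurd hp (by decide) | omega
end

section
/- Let x, y be integers with (x+r)^2 + ... + (x+6r)^2 = y^2 where r is an integer and gcd(x, y, r) = 1. Writing the equation as 3(2x+7r)^2 + 35r^2 = 2y^2, it follows that 7 divides both 2x+7r and y, contradicting primitivity; hence no such x, y exist for any r. -/
/-!
Doubling and completing the square turns the equation into `3 (2x + 7r)² + 35 r² = 2 y²`.
Modulo 7 this reads `(3 (2x + 7r))² = 6 y²`, and 6 is not a square modulo 7, so 7 divides
`2x + 7r` (hence `x`) and `y`. Then 49 divides `35 r²`, so 7 divides `r` as well,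
contradicting `gcd(x, y, r) = 1`.
-/

theorem two_mul_sum_six_sq {R : Type*} [CommRing R] (x r : R) :
    2 * ((x + r) ^ 2 + (x + 2 * r) ^ 2 + (x + 3 * r) ^ 2 + (x + 4 * r) ^ 2 +
      (x + 5 * r) ^ 2 + (x + 6 * r) ^ 2) = 3 * (2 * x + 7 * r) ^ 2 + 35 * r ^ 2 := by
  ring

theorem eq_zero_of_sq_eq_mul_sq {K : Type*} [Field K] {c a b : K} (hc : ¬IsSquare c)
    (h : a ^ 2 = c * b ^ 2) : a = 0 ∧ b = 0 := by
  have hb : b = 0 := by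
    by_contra hb
    exact hc ⟨a / b, by field_simp; linear_combination -h⟩
  subst hb
  exact ⟨pow_eq_zero_iff two_ne_zero |>.mp (by simpa using h), rfl⟩

theorem not_isSquare_six_zmod_seven : ¬IsSquare (6 : ZMod 7) := by
  decide

theorem seven_dvd_of_three_mul_sq_add_eq {a y r : ℤ}
    (h : 3 * a ^ 2 + 35 * r ^ 2 = 2 * y ^ 2) : 7 ∣ a ∧ 7 ∣ y ∧ 7 ∣ r := by
  have : Fact (Nat.Prime 7) := ⟨by norm_num⟩
  have hmod : ((3 * a : ℤ) : ZMod 7) ^ 2 = 6 * (y : ZMod 7) ^ 2 := by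
    have hcast := congrArg (Int.cast : ℤ → ZMod 7) h
    have h7 : (7 : ZMod 7) = 0 := rfl
    push_cast at hcast ⊢
    linear_combination 3 * hcast - 15 * (r : ZMod 7) ^ 2 * h7
  obtain ⟨h3a, hy⟩ := eq_zero_of_sq_eq_mul_sq not_isSquare_six_zmod_seven hmod
  rw [ZMod.intCast_zmod_eq_zero_iff_dvd] at h3a
  rw [ZMod.intCast_zmod_eq_zero_iff_dvd, Nat.cast_ofNat] at hy
  obtain ⟨a', rfl⟩ : (7 : ℤ) ∣ a := by push_cast at h3a; omega
  obtain ⟨y', rfl⟩ := hy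
  have hprime : Prime (7 : ℤ) := by norm_num
  have h5r : (7 : ℤ) ∣ 5 * r ^ 2 := ⟨2 * y' ^ 2 - 3 * a' ^ 2, by linarith⟩
  refine ⟨dvd_mul_right _ _, dvd_mul_right _ _, ?_⟩
  rcases hprime.dvd_mul.mp h5r with h75 | h7r
  · norm_num at h75
  · exact hprime.dvd_of_dvd_pow h7r

theorem stmt_18 :
    ¬ ∃ x y r : ℤ, Int.gcd x (Int.gcd y r) = 1 ∧
      (x + r) ^ 2 + (x + 2 * r) ^ 2 + (x + 3 * r) ^ 2 + (x + 4 * r) ^ 2 +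
        (x + 5 * r) ^ 2 + (x + 6 * r) ^ 2 = y ^ 2 := by
  rintro ⟨x, y, r, hgcd, hsum⟩
  have hsq : 3 * (2 * x + 7 * r) ^ 2 + 35 * r ^ 2 = 2 * y ^ 2 := by
    rw [← two_mul_sum_six_sq, hsum]
  obtain ⟨h7a, h7y, h7r⟩ := seven_dvd_of_three_mul_sq_add_eq hsq
  have h7x : (7 : ℤ) ∣ x := by omega
  have h7gcd := Int.dvd_coe_gcd h7x (Int.dvd_coe_gcd h7y h7r)
  rw [hgcd] at h7gcd
  norm_num at h7gcd
end
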